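/- Let σ ∈ S_k and τ ∈ S_n with k < n, let ⟨σ⟩ be an occurrence of σ in τ, and suppose every maximal group of similar letters of τ ∖ ⟨σ⟩ lies in a single region; let x be a letter of τ ∖ ⟨σ⟩ that is not similar to any other letter in its region. Then the poset I(⟨σ⟩, τ) is isomorphic (as a graded set, preserving rank parity) to the disjoint union I(⟨σ⟩, τ ∖ {x}) ⊔ I(⟨σ⟩ + x, τ), according to whether an element of I(⟨σ⟩, τ) includes the letter x or not. -/

import Mathlib

/-- `f` gives an occurrence of the pattern `σ` in `τ`: the positions `f 0 < f 1 < ⋯`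
carry letters of `τ` in the same relative order as `σ`. -/
def IsOccurrence {k n : ℕ} (σ : Equiv.Perm (Fin k)) (τ : Equiv.Perm (Fin n))
    (f : Fin k → Fin n) : Prop :=
  StrictMono f ∧ ∀ i j : Fin k, σ i < σ j ↔ τ (f i) < τ (f j)

/-- Two sets of kept positions `S, S'` (each containing the marked positions `A`)
determine the same element of the occurrence poset: the words of `τ` read along `S`
and along `S'` are order isomorphic, with the marked positions corresponding. -/
def OccEquiv {n : ℕ} (τ : Equiv.Perm (Fin n)) (A S S' : Finset (Fin n)) : Prop :=
  ∃ g : {x // x ∈ S} ≃o {x // x ∈ S'},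
    (∀ a b : {x // x ∈ S}, τ a.1 < τ b.1 ↔ τ (g a).1 < τ (g b).1) ∧
    (∀ a : {x // x ∈ S}, a.1 ∈ A ↔ (g a).1 ∈ A)

/-- Representatives of elements of the occurrence poset with marked positions `A`
and ground set `U`: sets of kept positions between `A` and `U`. -/
def OccCarrier {n : ℕ} (A U : Finset (Fin n)) := {S : Finset (Fin n) // A ⊆ S ∧ S ⊆ U}

/-- The occurrence poset `[⟨σ⟩, τ]` (with ground set `U`): kept-position sets modulo
order isomorphism respecting the marked occurrence. -/
def OccPoset {n : ℕ} (τ : Equiv.Perm (Fin n)) (A U : Finset (Fin n)) :=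
  Quot (fun S S' : OccCarrier A U => OccEquiv τ A S.1 S'.1)

def occMk {n : ℕ} (τ : Equiv.Perm (Fin n)) (A U : Finset (Fin n)) (S : OccCarrier A U) :
    OccPoset τ A U :=
  Quot.mk _ S

/-- The partial order of the occurrence poset: deletion of unmarked letters. -/
def occLE {n : ℕ} (τ : Equiv.Perm (Fin n)) (A U : Finset (Fin n))
    (q q' : OccPoset τ A U) : Prop :=
  ∃ S S' : OccCarrier A U, q = occMk τ A U S ∧ q' = occMk τ A U S' ∧ S.1 ⊆ S'.1

/-- The bottom element `⟨σ⟩` of the occurrence poset. -/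
def occBot {n : ℕ} (τ : Equiv.Perm (Fin n)) (A U : Finset (Fin n)) (h : A ⊆ U) :
    OccPoset τ A U :=
  occMk τ A U ⟨A, subset_rfl, h⟩

/-- The top element `τ` of the occurrence poset. -/
def occTop {n : ℕ} (τ : Equiv.Perm (Fin n)) (A U : Finset (Fin n)) (h : A ⊆ U) :
    OccPoset τ A U :=
  occMk τ A U ⟨U, h, subset_rfl⟩

/-- `J` is an interval block of the pattern of `τ` restricted to the kept positions `S`:
`J` consists of at least two kept positions, consecutive among `S` both in position and
in value. -/
def IsBlockIn {n : ℕ} (τ : Equiv.Perm (Fin n)) (S J : Finset (Fin n)) : Prop :=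
  J ⊆ S ∧ 2 ≤ J.card ∧
    (∀ x ∈ J, ∀ y ∈ J, ∀ z ∈ S, x ≤ z → z ≤ y → z ∈ J) ∧
    (∀ x ∈ J, ∀ y ∈ J, ∀ z ∈ S, τ x ≤ τ z → τ z ≤ τ y → z ∈ J)

/-- The pair (marked occurrence `A`, permutation given by kept positions `S`) has an
interval block: an interval block disjoint from the occurrence. -/
def PairHasBlock {n : ℕ} (τ : Equiv.Perm (Fin n)) (A S : Finset (Fin n)) : Prop :=
  ∃ J : Finset (Fin n), IsBlockIn τ S J ∧ ∀ p ∈ J, p ∉ A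

/-- An element of the occurrence poset is interval free if (a representative of) it has
no interval block disjoint from the marked occurrence. -/
def occIntervalFree {n : ℕ} (τ : Equiv.Perm (Fin n)) (A U : Finset (Fin n))
    (q : OccPoset τ A U) : Prop :=
  ∃ S : OccCarrier A U, q = occMk τ A U S ∧ ¬ PairHasBlock τ A S.1

theorem OccEquiv.card_eq {n : ℕ} {τ : Equiv.Perm (Fin n)} {A S S' : Finset (Fin n)}
    (h : OccEquiv τ A S S') : S.card = S'.card := by
  obtain ⟨g, -, -⟩ := h
  simpa using Fintype.card_congr g.toEquiv

/-- The rank of an element of the occurrence poset: its number of letters minus `k`. -/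
def occRank {n : ℕ} (τ : Equiv.Perm (Fin n)) (A U : Finset (Fin n)) (k : ℕ) :
    OccPoset τ A U → ℕ :=
  Quot.lift (fun S => S.1.card - k) (fun S S' h => by
    have hc := OccEquiv.card_eq h
    show S.1.card - k = S'.1.card - k
    omega)

/-- Positions `p` and `q` lie in the same region: no position between them (inclusive)
is a marked position. -/
def SameRegion {n : ℕ} (A : Finset (Fin n)) (p q : Fin n) : Prop :=
  ∀ z : Fin n, min p q ≤ z → z ≤ max p q → z ∉ A

/-- The pair (occurrence with marked positions `A`, `τ`) is separated: any two letters in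
the same region are separated in value by a letter of the occurrence. -/
def Separated {n : ℕ} (τ : Equiv.Perm (Fin n)) (A : Finset (Fin n)) : Prop :=
  ∀ p q : Fin n, SameRegion A p q → τ p < τ q → ∃ a ∈ A, τ p < τ a ∧ τ a < τ q

/-- The letters at positions `p, q` (with `τ p < τ q`) are similar: same region, and no
letter of the occurrence lies strictly between them in value. -/
def SimilarPos {n : ℕ} (τ : Equiv.Perm (Fin n)) (A : Finset (Fin n)) (p q : Fin n) : Prop :=
  SameRegion A p q ∧ τ p < τ q ∧ ∀ a ∈ A, ¬ (τ p < τ a ∧ τ a < τ q)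

/-- A group of similar letters: at least two letters, pairwise similar. -/
def IsSimilarGroup {n : ℕ} (τ : Equiv.Perm (Fin n)) (A : Finset (Fin n))
    (G : Finset (Fin n)) : Prop :=
  2 ≤ G.card ∧ ∀ p ∈ G, ∀ q ∈ G, τ p < τ q → SimilarPos τ A p q

/-- A maximal group of similar letters: one contained in no strictly larger group. -/
def IsMaxSimilarGroup {n : ℕ} (τ : Equiv.Perm (Fin n)) (A : Finset (Fin n))
    (G : Finset (Fin n)) : Prop :=
  IsSimilarGroup τ A G ∧ ∀ G' : Finset (Fin n), IsSimilarGroup τ A G' → G ⊆ G' → G' = G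

/-- The occurrence poset is a boolean algebra: isomorphic to the poset of all subsets of
a finite set, ordered by inclusion. -/
def IsBooleanOccPoset {n : ℕ} (τ : Equiv.Perm (Fin n)) (A U : Finset (Fin n)) : Prop :=
  ∃ (m : ℕ) (e : OccPoset τ A U ≃ Finset (Fin m)),
    ∀ q q' : OccPoset τ A U, occLE τ A U q q' ↔ e q ⊆ e q'

/-- The pattern poset `P`: permutations of every length, a permutation of length `m` being
an element of `Equiv.Perm (Fin m)` (its standard form). -/
def PatternPoset := Σ m : ℕ, Equiv.Perm (Fin m)

/-- The order of the pattern poset: pattern containment. -/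
def patternLE (a b : PatternPoset) : Prop :=
  ∃ f : Fin a.1 → Fin b.1, IsOccurrence a.2 b.2 f

/-- `b` covers `a` in the pattern poset: `a < b` and `b` has one letter more than `a`. -/
def patternCovers (a b : PatternPoset) : Prop :=
  patternLE a b ∧ a ≠ b ∧ b.1 = a.1 + 1

/-!
An isomorphism between two representatives of an element of `[⟨σ⟩, τ]` restricts to an order
automorphism of the (finite, linearly ordered) set of marked letters, so it fixes every letter of
`⟨σ⟩`. It therefore sends `x₀` to a letter in the same region which lies on the same side of every
letter of `⟨σ⟩` in value; as `x₀` is similar to no other letter, that letter is `x₀` itself. Hence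
whether an element contains `x₀` is well defined, and when it does `x₀` may be marked too: this
splits `[⟨σ⟩, τ]` into `[⟨σ⟩, τ ∖ {x₀}] ⊔ [⟨σ⟩ + x₀, τ]` without changing numbers of letters.
An interval block avoiding `⟨σ⟩` never contains `x₀`, since any other letter of the block would
be similar to `x₀`; so marking `x₀` does not change interval freeness.
-/

open Finset

def Equiv.subtypeSumOfIff {α β γ : Type*} (Φ : α ≃ β ⊕ γ) {p : α → Prop} {r : β → Prop}
    {s : γ → Prop} (h : ∀ a, p a ↔ Sum.elim r s (Φ a)) : {a // p a} ≃ {b // r b} ⊕ {c // s c} :=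
  (Φ.subtypeEquiv h).trans Equiv.subtypeSum

lemma Equiv.sumMap_val_subtypeSumOfIff {α β γ : Type*} (Φ : α ≃ β ⊕ γ) {p : α → Prop}
    {r : β → Prop} {s : γ → Prop} (h : ∀ a, p a ↔ Sum.elim r s (Φ a)) (a : {a // p a}) :
    Sum.map Subtype.val Subtype.val (Φ.subtypeSumOfIff h a) = Φ a.1 := by
  suffices ∀ c : {c // Sum.elim r s c}, Sum.map Subtype.val Subtype.val (Equiv.subtypeSum c) = c.1
    from this (Φ.subtypeEquiv h a)
  rintro ⟨b | c, _⟩ <;> rfl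

lemma not_between_of_lt_iff {α : Type*} [LinearOrder α] {x y z : α}
    (h₁ : x < z ↔ y < z) (h₂ : z < x ↔ z < y) : ¬ (min x y < z ∧ z < max x y) := by
  rw [min_lt_iff, lt_max_iff, h₁, h₂, or_self, or_self]
  exact fun ⟨h, h'⟩ => lt_asymm h h'

lemma mem_of_min_le_of_le_max {α β : Type*} [LinearOrder β] {φ : α → β} {S J : Finset α}
    (hJ : ∀ x ∈ J, ∀ y ∈ J, ∀ z ∈ S, φ x ≤ φ z → φ z ≤ φ y → z ∈ J)
    {x y z : α} (hx : x ∈ J) (hy : y ∈ J) (hz : z ∈ S)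
    (h₁ : min (φ x) (φ y) ≤ φ z) (h₂ : φ z ≤ max (φ x) (φ y)) : z ∈ J := by
  rcases le_total (φ x) (φ y) with h | h
  · exact hJ x hx y hy z hz (by simpa [h] using h₁) (by simpa [h] using h₂)
  · exact hJ y hy x hx z hz (by simpa [h] using h₁) (by simpa [h] using h₂)

lemma OrderIso.val_apply_eq_of_mem {α : Type*} [LinearOrder α] {B S S' : Finset α}
    (hBS : B ⊆ S) (g : {x // x ∈ S} ≃o {x // x ∈ S'})
    (hg : ∀ a : {x // x ∈ S}, a.1 ∈ B ↔ (g a).1 ∈ B) {a : {x // x ∈ S}} (ha : a.1 ∈ B) :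
    (g a).1 = a.1 := by
  let r : {x // x ∈ B} → {x // x ∈ B} := fun b => ⟨g ⟨b, hBS b.2⟩, (hg _).1 b.2⟩
  have hr : StrictMono r := fun b b' h =>
    g.strictMono (show (⟨b, hBS b.2⟩ : {x // x ∈ S}) < ⟨b', hBS b'.2⟩ from h)
  exact congrArg Subtype.val (hr.apply_eq (x := ⟨a.1, ha⟩))

variable {n : ℕ} {τ : Equiv.Perm (Fin n)} {A B S S' U U' : Finset (Fin n)} {x : Fin n}

lemma SameRegion.symm {p q : Fin n} (h : SameRegion A p q) : SameRegion A q p :=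
  fun z h₁ h₂ => h z (min_comm q p ▸ h₁) (max_comm q p ▸ h₂)

abbrev NotSimilarToAny (τ : Equiv.Perm (Fin n)) (A : Finset (Fin n)) (x : Fin n) : Prop :=
  ∀ q : Fin n, ¬ SimilarPos τ A x q ∧ ¬ SimilarPos τ A q x

theorem NotSimilarToAny.eq_of_not_between (hx : NotSimilarToAny τ A x) {y : Fin n}
    (hxA : x ∉ A) (hyA : y ∉ A) (hpos : ∀ z ∈ A, ¬ (min x y < z ∧ z < max x y))
    (hval : ∀ z ∈ A, ¬ (min (τ x) (τ y) < τ z ∧ τ z < max (τ x) (τ y))) : x = y := by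
  have hreg : SameRegion A x y := by
    intro z h₁ h₂ hzA
    have hzx : z ≠ x := ne_of_mem_of_not_mem hzA hxA
    have hzy : z ≠ y := ne_of_mem_of_not_mem hzA hyA
    refine hpos z hzA ⟨h₁.lt_of_ne ?_, h₂.lt_of_ne ?_⟩
    · rcases min_choice x y with h | h <;> rw [h] <;> [exact hzx.symm; exact hzy.symm]
    · rcases max_choice x y with h | h <;> rw [h] <;> [exact hzx; exact hzy]
  rcases lt_trichotomy (τ x) (τ y) with h | h | h
  · refine absurd ⟨hreg, h, fun a ha hb => hval a ha ?_⟩ (hx y).1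
    rwa [min_eq_left h.le, max_eq_right h.le]
  · exact τ.injective h
  · refine absurd ⟨hreg.symm, h, fun a ha hb => hval a ha ?_⟩ (hx y).2
    rwa [min_eq_right h.le, max_eq_left h.le]

theorem NotSimilarToAny.val_apply_eq (hx : NotSimilarToAny τ A x) (hxA : x ∉ A)
    (hAS : A ⊆ S) (g : {x // x ∈ S} ≃o {x // x ∈ S'})
    (hτ : ∀ a b : {x // x ∈ S}, τ a.1 < τ b.1 ↔ τ (g a).1 < τ (g b).1)
    (hg : ∀ a : {x // x ∈ S}, a.1 ∈ A ↔ (g a).1 ∈ A) (hxS : x ∈ S) :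
    (g ⟨x, hxS⟩).1 = x := by
  have hfix (z : Fin n) (hz : z ∈ A) : (g ⟨z, hAS hz⟩).1 = z :=
    OrderIso.val_apply_eq_of_mem hAS g hg hz
  refine (hx.eq_of_not_between hxA (fun h => hxA ((hg _).2 h)) (fun z hz => ?_)
    (fun z hz => ?_)).symm
  · have h₁ := g.lt_iff_lt (x := ⟨x, hxS⟩) (y := ⟨z, hAS hz⟩)
    have h₂ := g.lt_iff_lt (x := ⟨z, hAS hz⟩) (y := ⟨x, hxS⟩)
    rw [← Subtype.coe_lt_coe, ← Subtype.coe_lt_coe, hfix z hz] at h₁ h₂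
    exact not_between_of_lt_iff h₁.symm h₂.symm
  · have h₁ := hτ ⟨x, hxS⟩ ⟨z, hAS hz⟩
    have h₂ := hτ ⟨z, hAS hz⟩ ⟨x, hxS⟩
    rw [hfix z hz] at h₁ h₂
    exact not_between_of_lt_iff h₁ h₂

theorem OccEquiv.symm (h : OccEquiv τ A S S') : OccEquiv τ A S' S := by
  obtain ⟨g, hτ, hg⟩ := h
  refine ⟨g.symm, fun a b => ?_, fun a => ?_⟩
  · simpa using (hτ (g.symm a) (g.symm b)).symm
  · simpa using (hg (g.symm a)).symm

theorem OccEquiv.of_subset (hAB : A ⊆ B) (hBS : B ⊆ S) (h : OccEquiv τ B S S') :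
    OccEquiv τ A S S' := by
  obtain ⟨g, hτ, hg⟩ := h
  have hfix {a : {x // x ∈ S}} (ha : a.1 ∈ B) := OrderIso.val_apply_eq_of_mem hBS g hg ha
  refine ⟨g, hτ, fun a => ⟨fun ha => ?_, fun ha => ?_⟩⟩
  · rwa [hfix (hAB ha)]
  · rwa [← hfix ((hg a).2 (hAB ha))]

theorem OccEquiv.insert_of_mem (hx : NotSimilarToAny τ A x) (hxA : x ∉ A) (hAS : A ⊆ S)
    (h : OccEquiv τ A S S') (hxS : x ∈ S) : x ∈ S' ∧ OccEquiv τ (insert x A) S S' := by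
  obtain ⟨g, hτ, hg⟩ := h
  have hgx := hx.val_apply_eq hxA hAS g hτ hg hxS
  refine ⟨hgx ▸ (g ⟨x, hxS⟩).2, g, hτ, fun a => ?_⟩
  simp only [mem_insert]
  refine or_congr ⟨fun ha => ?_, fun ha => ?_⟩ (hg a)
  · rwa [show a = ⟨x, hxS⟩ from Subtype.ext ha]
  · rw [show a = ⟨x, hxS⟩ from g.injective (Subtype.ext (ha.trans hgx.symm))]

theorem OccEquiv.notMem (hx : NotSimilarToAny τ A x) (hxA : x ∉ A) (hAS' : A ⊆ S')
    (h : OccEquiv τ A S S') (hxS : x ∉ S) : x ∉ S' :=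
  fun hxS' => hxS (h.symm.insert_of_mem hx hxA hAS' hxS').1

theorem NotSimilarToAny.pairHasBlock_insert_iff (hx : NotSimilarToAny τ A x) (hAS : A ⊆ S) :
    PairHasBlock τ (insert x A) S ↔ PairHasBlock τ A S := by
  refine ⟨fun ⟨J, hJ, hd⟩ => ⟨J, hJ, fun p hp hpA => hd p hp (mem_insert_of_mem hpA)⟩, ?_⟩
  rintro ⟨J, hJ, hd⟩
  by_cases hxJ : x ∈ J
  · obtain ⟨-, hcard, hpos, hval⟩ := hJ
    obtain ⟨y, hyJ, hyx⟩ := exists_mem_ne hcard x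
    refine absurd (hx.eq_of_not_between (hd x hxJ) (hd y hyJ) (fun z hz hb => ?_)
      (fun z hz hb => ?_)).symm hyx
    · exact hd z (mem_of_min_le_of_le_max (φ := id) hpos hxJ hyJ (hAS hz) hb.1.le hb.2.le) hz
    · exact hd z (mem_of_min_le_of_le_max hval hxJ hyJ (hAS hz) hb.1.le hb.2.le) hz
  · exact ⟨J, hJ, fun p hp hpA => (mem_insert.1 hpA).elim (fun h => hxJ (h ▸ hp)) (hd p hp)⟩

def OccCarrier.mark (S : OccCarrier A U) (hxS : x ∈ S.1) : OccCarrier (insert x A) U :=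
  ⟨S.1, insert_subset hxS S.2.1, S.2.2⟩

def OccCarrier.restrict (S : OccCarrier A U) (hxS : x ∉ S.1) : OccCarrier A (U.erase x) :=
  ⟨S.1, S.2.1, fun _ hz => mem_erase.2 ⟨ne_of_mem_of_not_mem hz hxS, S.2.2 hz⟩⟩

namespace OccPoset

theorem occMk_surjective : Function.Surjective (occMk τ A U) :=
  Quot.exists_rep

def ofSubset (hU : U ⊆ U') : OccPoset τ A U → OccPoset τ A U' :=
  Quot.map (fun S => ⟨S.1, S.2.1, S.2.2.trans hU⟩) fun _ _ h => h

def unmark (x : Fin n) : OccPoset τ (insert x A) U → OccPoset τ A U :=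
  Quot.map (fun S => ⟨S.1, (subset_insert x A).trans S.2.1, S.2.2⟩)
    fun S _ h => h.of_subset (subset_insert x A) S.2.1

def splitRep (τ : Equiv.Perm (Fin n)) (x : Fin n) (S : OccCarrier A U) :
    OccPoset τ A (U.erase x) ⊕ OccPoset τ (insert x A) U :=
  if hxS : x ∈ S.1 then .inr (occMk τ _ U (S.mark hxS)) else .inl (occMk τ A _ (S.restrict hxS))

def split (hx : NotSimilarToAny τ A x) (hxA : x ∉ A) :
    OccPoset τ A U ≃ OccPoset τ A (U.erase x) ⊕ OccPoset τ (insert x A) U where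
  toFun := Quot.lift (splitRep τ x) fun S S' h => by
    by_cases hxS : x ∈ S.1
    · obtain ⟨hxS', h'⟩ := h.insert_of_mem hx hxA S.2.1 hxS
      rw [splitRep, splitRep, dif_pos hxS, dif_pos hxS']
      exact congrArg Sum.inr (Quot.sound h')
    · rw [splitRep, splitRep, dif_neg hxS, dif_neg (h.notMem hx hxA S'.2.1 hxS)]
      exact congrArg Sum.inl (Quot.sound h)
  invFun := Sum.elim (ofSubset (erase_subset x U)) (unmark x)
  left_inv q := by
    obtain ⟨S, rfl⟩ := occMk_surjective q
    by_cases hxS : x ∈ S.1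
    · exact congrArg (Sum.elim _ _) (dif_pos hxS)
    · exact congrArg (Sum.elim _ _) (dif_neg hxS)
  right_inv := by
    rintro (q | q) <;> obtain ⟨S, rfl⟩ := occMk_surjective q
    · exact dif_neg fun h => (mem_erase.1 (S.2.2 h)).1 rfl
    · exact dif_pos (S.2.1 (mem_insert_self x A))

variable (hx : NotSimilarToAny τ A x) (hxA : x ∉ A)

theorem split_mk_of_mem {S : OccCarrier A U} (hxS : x ∈ S.1) :
    split hx hxA (occMk τ A U S) = .inr (occMk τ _ U (S.mark hxS)) :=
  dif_pos hxS

theorem split_mk_of_notMem {S : OccCarrier A U} (hxS : x ∉ S.1) :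
    split hx hxA (occMk τ A U S) = .inl (occMk τ A _ (S.restrict hxS)) :=
  dif_neg hxS

theorem exists_mk_eq_and_mem_iff_isRight_split (q : OccPoset τ A U) :
    ∃ S : OccCarrier A U, q = occMk τ A U S ∧ (x ∈ S.1 ↔ (split hx hxA q).isRight) := by
  obtain ⟨S, rfl⟩ := occMk_surjective q
  refine ⟨S, rfl, ?_⟩
  by_cases hxS : x ∈ S.1
  · simp [split_mk_of_mem hx hxA hxS, hxS]
  · simp [split_mk_of_notMem hx hxA hxS, hxS]

theorem occRank_split (k : ℕ) (q : OccPoset τ A U) :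
    Sum.elim (occRank τ A (U.erase x) k) (occRank τ (insert x A) U k) (split hx hxA q) =
      occRank τ A U k q := by
  obtain ⟨S, rfl⟩ := occMk_surjective q
  by_cases hxS : x ∈ S.1
  · rw [split_mk_of_mem hx hxA hxS]; rfl
  · rw [split_mk_of_notMem hx hxA hxS]; rfl

theorem occIntervalFree_iff_split (q : OccPoset τ A U) :
    occIntervalFree τ A U q ↔ Sum.elim (occIntervalFree τ A (U.erase x))
      (occIntervalFree τ (insert x A) U) (split hx hxA q) := by
  constructor
  · rintro ⟨S, rfl, hS⟩
    by_cases hxS : x ∈ S.1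
    · rw [split_mk_of_mem hx hxA hxS]
      exact ⟨_, rfl, fun h => hS ((hx.pairHasBlock_insert_iff S.2.1).1 h)⟩
    · rw [split_mk_of_notMem hx hxA hxS]
      exact ⟨_, rfl, hS⟩
  · obtain ⟨r, rfl⟩ := (split hx hxA).symm.surjective q
    rw [Equiv.apply_symm_apply]
    rcases r with p | p
    · rintro ⟨T, rfl, hT⟩
      exact ⟨_, rfl, hT⟩
    · rintro ⟨T, rfl, hT⟩
      exact ⟨_, rfl, fun h => hT ((hx.pairHasBlock_insert_iff
        ((subset_insert x A).trans T.2.1)).2 h)⟩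

end OccPoset

theorem interval_free_subposet_disjoint_union_general {k n : ℕ}
    (τ : Equiv.Perm (Fin n))
    (A : Finset (Fin n))
    (x₀ : Fin n) (hx₀ : x₀ ∉ A)
    (hxnotsim : ∀ q : Fin n, ¬ SimilarPos τ A x₀ q ∧ ¬ SimilarPos τ A q x₀) :
    ∃ e : {q : OccPoset τ A Finset.univ // occIntervalFree τ A Finset.univ q} ≃
        ({q : OccPoset τ A (Finset.univ.erase x₀) //
            occIntervalFree τ A (Finset.univ.erase x₀) q} ⊕
         {q : OccPoset τ (insert x₀ A) Finset.univ //
            occIntervalFree τ (insert x₀ A) Finset.univ q}),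
      (∀ q p, e q = Sum.inl p →
        ∃ S : OccCarrier A Finset.univ, q.1 = occMk τ A Finset.univ S ∧ x₀ ∉ S.1) ∧
      (∀ q p, e q = Sum.inr p →
        ∃ S : OccCarrier A Finset.univ, q.1 = occMk τ A Finset.univ S ∧ x₀ ∈ S.1) ∧
      (∀ q, Even (occRank τ A Finset.univ k q.1) ↔
        Sum.elim (fun p => Even (occRank τ A (Finset.univ.erase x₀) k p.1))
          (fun p => Even (occRank τ (insert x₀ A) Finset.univ k p.1)) (e q)) := by
  let e := (OccPoset.split (U := Finset.univ) hxnotsim hx₀).subtypeSumOfIff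
    (OccPoset.occIntervalFree_iff_split hxnotsim hx₀)
  have he (q) : OccPoset.split hxnotsim hx₀ q.1 = Sum.map Subtype.val Subtype.val (e q) :=
    (Equiv.sumMap_val_subtypeSumOfIff _ _ q).symm
  refine ⟨e, fun q p hqp => ?_, fun q p hqp => ?_, fun q => ?_⟩
  · obtain ⟨S, hq, hxS⟩ := OccPoset.exists_mk_eq_and_mem_iff_isRight_split hxnotsim hx₀ q.1
    rw [he, hqp] at hxS
    exact ⟨S, hq, fun h => by simpa using hxS.1 h⟩
  · obtain ⟨S, hq, hxS⟩ := OccPoset.exists_mk_eq_and_mem_iff_isRight_split hxnotsim hx₀ q.1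
    rw [he, hqp] at hxS
    exact ⟨S, hq, hxS.2 rfl⟩
  · rw [← OccPoset.occRank_split hxnotsim hx₀ k q.1, he]
    rcases e q with p | p <;> rfl

/-- if every maximal group of similar letters of `τ ∖ ⟨σ⟩` lies in a single
region, and `x₀` is a letter of `τ ∖ ⟨σ⟩` not similar to any other letter in its region,
then `I(⟨σ⟩, τ)` is isomorphic, as a graded set preserving rank parity, to the disjoint
union `I(⟨σ⟩, τ ∖ {x₀}) ⊔ I(⟨σ⟩ + x₀, τ)`, according to whether an element includes the
letter `x₀` or not. -/
theorem interval_free_subposet_disjoint_union {k n : ℕ} (hkn : k < n)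
    (σ : Equiv.Perm (Fin k)) (τ : Equiv.Perm (Fin n))
    (f : Fin k → Fin n) (hf : IsOccurrence σ τ f)
    (A : Finset (Fin n)) (hA : A = Finset.image f Finset.univ)
    (x₀ : Fin n) (hx₀ : x₀ ∉ A)
    (hmax : ∀ G G' : Finset (Fin n), IsMaxSimilarGroup τ A G → IsMaxSimilarGroup τ A G' →
      ∀ p ∈ G, ∀ q ∈ G', p = q ∨ SameRegion A p q)
    (hxnotsim : ∀ q : Fin n, ¬ SimilarPos τ A x₀ q ∧ ¬ SimilarPos τ A q x₀) :
    ∃ e : {q : OccPoset τ A Finset.univ // occIntervalFree τ A Finset.univ q} ≃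
        ({q : OccPoset τ A (Finset.univ.erase x₀) //
            occIntervalFree τ A (Finset.univ.erase x₀) q} ⊕
         {q : OccPoset τ (insert x₀ A) Finset.univ //
            occIntervalFree τ (insert x₀ A) Finset.univ q}),
      (∀ q p, e q = Sum.inl p →
        ∃ S : OccCarrier A Finset.univ, q.1 = occMk τ A Finset.univ S ∧ x₀ ∉ S.1) ∧
      (∀ q p, e q = Sum.inr p →
        ∃ S : OccCarrier A Finset.univ, q.1 = occMk τ A Finset.univ S ∧ x₀ ∈ S.1) ∧
      (∀ q, Even (occRank τ A Finset.univ k q.1) ↔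
        Sum.elim (fun p => Even (occRank τ A (Finset.univ.erase x₀) k p.1))
          (fun p => Even (occRank τ (insert x₀ A) Finset.univ k p.1)) (e q)) :=
  interval_free_subposet_disjoint_union_general τ A x₀ hx₀ hxnotsim
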